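/- int_Reg(Red-Blue Dominating Set) is decidable: there is an algorithm (a computable function on finite encodings of NFAs) that, given an arbitrary NFA M over the alphabet Σ = {▷, 1, a, #, $}, decides whether there exists a word w ∈ L(M) ∩ Enc such that decode_red-blue(w) = (G, k) where the red-blue graph G has a red-blue dominating set of size at most k. -/

import Mathlib

/-- The fixed five-letter alphabet Σ = {▷, 1, a, #, $}. -/
inductive Letter : Type
  | tri    -- ▷
  | one    -- 1
  | lett   -- a
  | hash   -- #
  | dollar -- $
deriving DecidableEq

/-- Words over the alphabet Σ. -/
abbrev Word := List Letter

/-- The threshold token `▷1^k$`. -/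
def thresholdTok (k : ℕ) : Word := Letter.tri :: (List.replicate k Letter.one ++ [Letter.dollar])

/-- The left vertex token `▷a^p#`. -/
def leftTok (p : ℕ) : Word := Letter.tri :: (List.replicate p Letter.lett ++ [Letter.hash])

/-- The right vertex token `▷a^q$`. -/
def rightTok (q : ℕ) : Word := Letter.tri :: (List.replicate q Letter.lett ++ [Letter.dollar])

/-- The encoding `▷1^k$ ∏_i (▷a^{p_i}# ▷a^{q_i}$)` of a threshold `k` together with a
list of (encoded) edges. -/
def encode (k : ℕ) (es : List (ℕ × ℕ)) : Word :=
  thresholdTok k ++ (es.map (fun e => leftTok e.1 ++ rightTok e.2)).flatten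

/-- The regular language `Enc = ▷1*$(▷a*#▷a*$)*` of all encodings. -/
def Enc : Set Word := { w | ∃ (k : ℕ) (es : List (ℕ × ℕ)), w = encode k es }

/-- A token: a threshold token, a left vertex token, or a right vertex token. -/
def IsToken (w : Word) : Prop :=
  (∃ k, w = thresholdTok k) ∨ (∃ p, w = leftTok p) ∨ (∃ q, w = rightTok q)

/-- A representative function is token-preserving if all representatives are tokens. -/
def TokenPreserving {Q : Type} (rep : Q → Q → Set Word) : Prop :=
  ∀ p q : Q, ∀ w ∈ rep p q, IsToken w

def letterEquiv : Letter ≃ Fin 5 where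
  toFun s :=
    match s with
    | Letter.tri => 0
    | Letter.one => 1
    | Letter.lett => 2
    | Letter.hash => 3
    | Letter.dollar => 4
  invFun n :=
    if n = 0 then Letter.tri
    else if n = 1 then Letter.one
    else if n = 2 then Letter.lett
    else if n = 3 then Letter.hash
    else Letter.dollar
  left_inv s := by cases s <;> rfl
  right_inv n := by fin_cases n <;> rfl

instance : Primcodable Letter := Primcodable.ofEquiv (Fin 5) letterEquiv

/-- A finite encoding of an NFA over `Letter` with states named by natural numbers:
a list of transition triples, an initial state, and a list of final states. -/
abbrev NFAEnc : Type := List (ℕ × Letter × ℕ) × ℕ × List ℕ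

/-- One transition step of an encoded NFA on a set of states. -/
def encStep (T : List (ℕ × Letter × ℕ)) (S : Set ℕ) (x : Letter) : Set ℕ :=
  { q' | ∃ q ∈ S, (q, x, q') ∈ T }

/-- The language accepted by an encoded NFA. -/
def encLang (M : NFAEnc) : Set Word :=
  { w | ∃ qf ∈ M.2.2, qf ∈ w.foldl (encStep M.1) {M.2.1} }

/-- A red-blue graph: fixed color classes of red and blue vertices (each named by
natural numbers) and edges, each joining a red vertex (first component) and a blue
vertex (second component). -/
structure RBGraph where
  R : Finset ℕ
  B : Finset ℕ
  E : Finset (ℕ × ℕ)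

/-- `G` has a red-blue dominating set of size at most `k`: a set of at most `k` red
vertices such that every blue vertex has a neighbor in it. -/
def HasRBDS (G : RBGraph) (k : ℕ) : Prop :=
  ∃ S : Finset ℕ, S ⊆ G.R ∧ S.card ≤ k ∧ ∀ b ∈ G.B, ∃ r ∈ S, (r, b) ∈ G.E

/-- Merging the red vertices `v, v'` into the new red vertex `x`. -/
def redMerge (G : RBGraph) (v v' x : ℕ) : RBGraph where
  R := insert x ((G.R.erase v).erase v')
  B := G.B
  E := G.E.image (fun e => (if e.1 = v ∨ e.1 = v' then x else e.1, e.2))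

/-- Merging the blue vertices `v, v'` into the new blue vertex `x`. -/
def blueMerge (G : RBGraph) (v v' x : ℕ) : RBGraph where
  R := G.R
  B := insert x ((G.B.erase v).erase v')
  E := G.E.image (fun e => (e.1, if e.2 = v ∨ e.2 = v' then x else e.2))

/-- A single color-preserving merge operation on two vertices of the same color
(the new vertex is fresh). -/
def RBMergeStep (G G' : RBGraph) : Prop :=
  (∃ v v' x : ℕ, v ∈ G.R ∧ v' ∈ G.R ∧ x ∉ (G.R.erase v).erase v' ∧
      G' = redMerge G v v' x) ∨
  (∃ v v' x : ℕ, v ∈ G.B ∧ v' ∈ G.B ∧ x ∉ (G.B.erase v).erase v' ∧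
      G' = blueMerge G v v' x)

/-- The red-blue graph described by a list of (encoded) edges: the red vertices are the
first components, the blue vertices the second components. -/
def rbOf (es : List (ℕ × ℕ)) : RBGraph where
  R := (es.map Prod.fst).toFinset
  B := (es.map Prod.snd).toFinset
  E := es.toFinset

/-- `decode_red-blue(w) = (G, k)`. -/
def decodesToRB (w : Word) (G : RBGraph) (k : ℕ) : Prop :=
  ∃ es : List (ℕ × ℕ), w = encode k es ∧ G = rbOf es

/-!
A run of an NFA with `m` transitions on a block `a^x` with `x ≥ (m + 1) ^ 2 * (m + 1)!` passes
`(m + 1) * (m + 1)!` disjoint loops of length at most `m + 1`; some length `c` occurs `(m + 1)!`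
times, and cutting out `(m + 1)! / c` of those loops shortens the block by exactly `(m + 1)!`.
Reducing every vertex name (and the threshold, with a slightly larger bound) this way keeps the
word accepted; renaming vertices maps dominating sets to dominating sets, and a threshold that was
reduced still exceeds the number of red vertices. Once vertex names are bounded there are few
distinct edges, and if the edge list is long, two block boundaries of the run agree both in the
state and in the set of edges read so far, so the edges between them can be dropped. Hence it
suffices to search a finite, computable set of candidate encodings.
-/

open scoped Nat

theorem Finset.exists_lt_map_eq_of_card_lt_of_maps_to {α β : Type*} [LinearOrder α]
    {s : Finset α} {t : Finset β} (hc : t.card < s.card) {f : α → β} (hf : Set.MapsTo f s t) :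
    ∃ i ∈ s, ∃ j ∈ s, i < j ∧ f i = f j := by
  obtain ⟨i, hi, j, hj, hne, heq⟩ := Finset.exists_ne_map_eq_of_card_lt_of_maps_to hc hf
  rcases hne.lt_or_gt with h | h
  exacts [⟨i, hi, j, hj, h, heq⟩, ⟨j, hj, i, hi, h, heq.symm⟩]

/-- The result of subtracting `Λ` from `x` for as long as it is at least `B`. -/
def reduceBelow (B Λ x : ℕ) : ℕ :=
  if x < B then x else B - Λ + (x - (B - Λ)) % Λ

section reduceBelow

variable {B Λ x : ℕ}

theorem reduceBelow_of_lt (h : x < B) : reduceBelow B Λ x = x := if_pos h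

theorem reduceBelow_lt (hΛ : 0 < Λ) (hΛB : Λ ≤ B) : reduceBelow B Λ x < B := by
  unfold reduceBelow
  split_ifs with h
  · exact h
  · have := Nat.mod_lt (x - (B - Λ)) hΛ
    omega

theorem sub_le_reduceBelow (h : B ≤ x) : B - Λ ≤ reduceBelow B Λ x := by
  rw [reduceBelow, if_neg (by omega)]
  exact Nat.le_add_right _ _

theorem reduceBelow_induction {P : ℕ → Prop} (step : ∀ y, B ≤ y → P y → P (y - Λ))
    (hx : P x) : P (reduceBelow B Λ x) := by
  unfold reduceBelow
  split_ifs with h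
  · exact hx
  set y := B - Λ + (x - (B - Λ)) % Λ
  have down : ∀ t, P (y + Λ * t) → P y := by
    intro t
    induction t with
    | zero => simp
    | succ t ih =>
      intro ht
      rw [Nat.mul_succ, ← Nat.add_assoc] at ht
      exact ih (by simpa using step _ (by omega) ht)
  refine down ((x - (B - Λ)) / Λ) ?_
  rwa [Nat.add_assoc, Nat.mod_add_div, Nat.add_sub_cancel' (by omega)]

end reduceBelow

namespace NFA

variable {α σ : Type*} {A : NFA α σ}

theorem evalFrom_mono {S T : Set σ} (h : S ⊆ T) (w : List α) :
    A.evalFrom S w ⊆ A.evalFrom T w := by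
  rw [← Set.union_eq_self_of_subset_left h, evalFrom_union]
  exact Set.subset_union_left

theorem mem_evalFrom_singleton_append {p r : σ} {u v : List α} :
    r ∈ A.evalFrom {p} (u ++ v) ↔ ∃ q ∈ A.evalFrom {p} u, r ∈ A.evalFrom {q} v := by
  rw [evalFrom_append, mem_evalFrom_iff_exists]

theorem mem_evalFrom_append_of_mem {p q r : σ} {u v : List α} (hu : q ∈ A.evalFrom {p} u)
    (hv : r ∈ A.evalFrom {q} v) : r ∈ A.evalFrom {p} (u ++ v) :=
  mem_evalFrom_singleton_append.2 ⟨q, hu, hv⟩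

theorem evalFrom_subset_of_step_subset {Q : Set σ} (hQ : ∀ q a, A.step q a ⊆ Q) {S : Set σ} :
    ∀ {w : List α}, w ≠ [] → A.evalFrom S w ⊆ Q
  | [a], _ => by
    simpa [stepSet] using fun q _ => hQ q a
  | a :: b :: w, _ => by
    rw [evalFrom_cons]
    exact evalFrom_subset_of_step_subset hQ (List.cons_ne_nil b w)

def EvalLE (A : NFA α σ) (w w' : List α) : Prop :=
  ∀ S, A.evalFrom S w ⊆ A.evalFrom S w'

theorem EvalLE.refl (w : List α) : A.EvalLE w w := fun _ => subset_rfl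

theorem EvalLE.append {u u' v v' : List α} (hu : A.EvalLE u u') (hv : A.EvalLE v v') :
    A.EvalLE (u ++ v) (u' ++ v') := fun S => by
  simp only [evalFrom_append]
  exact (evalFrom_mono (hu S) v).trans (hv _)

theorem EvalLE.flatten_map {β : Type*} {f g : β → List α} (h : ∀ b, A.EvalLE (f b) (g b)) :
    ∀ l : List β, A.EvalLE (l.map f).flatten (l.map g).flatten
  | [] => EvalLE.refl []
  | b :: l => by simpa using (h b).append (EvalLE.flatten_map h l)

theorem evalLE_of_mem_singleton {w w' : List α}
    (h : ∀ p r, r ∈ A.evalFrom {p} w → r ∈ A.evalFrom {p} w') : A.EvalLE w w' := by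
  intro S r hr
  obtain ⟨p, hp, hr⟩ := mem_evalFrom_iff_exists.1 hr
  exact mem_evalFrom_iff_exists.2 ⟨p, hp, h p r hr⟩

variable {Q : Finset σ} {n : ℕ} {a : α}

theorem exists_prefixes_meet (hQ : ∀ q a, A.step q a ⊆ Q) (hn : Q.card < n) {p r : σ} {x : ℕ}
    (h : r ∈ A.evalFrom {p} (List.replicate x a)) (hx : n ≤ x) :
    ∃ q i j, i < j ∧ j ≤ n ∧ q ∈ A.evalFrom {p} (List.replicate i a) ∧
      q ∈ A.evalFrom {p} (List.replicate j a) ∧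
      r ∈ A.evalFrom {q} (List.replicate (x - j) a) := by
  have hsplit : ∀ k, ∃ q ∈ A.evalFrom {p} (List.replicate (min k x) a),
      r ∈ A.evalFrom {q} (List.replicate (x - k) a) := fun k => by
    rw [← List.take_replicate, ← List.drop_replicate, ← mem_evalFrom_singleton_append,
      List.take_append_drop]
    exact h
  choose s hpre hsuf using hsplit
  have hmaps : Set.MapsTo s (Finset.Icc 1 n) Q := fun k hk => by
    simp only [Finset.coe_Icc, Set.mem_Icc] at hk
    refine evalFrom_subset_of_step_subset hQ ?_ (hpre k)
    simp only [ne_eq, List.replicate_eq_nil_iff]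
    omega
  obtain ⟨i, hi, j, hj, hij, hs⟩ :=
    Finset.exists_lt_map_eq_of_card_lt_of_maps_to (by simpa using hn) hmaps
  simp only [Finset.mem_Icc] at hi hj
  refine ⟨s i, i, j, hij, hj.2, ?_, ?_, hs ▸ hsuf j⟩
  · simpa [show min i x = i by omega] using hpre i
  · simpa [hs, show min j x = j by omega] using hpre j

theorem exists_removable_loops (hQ : ∀ q a, A.step q a ⊆ Q) (hn : Q.card < n) :
    ∀ (N : ℕ) {p r : σ} {x : ℕ}, r ∈ A.evalFrom {p} (List.replicate x a) →
      n * N ≤ x →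
      ∃ L : List ℕ, L.length = N ∧ (∀ c ∈ L, c ∈ Finset.Icc 1 n) ∧
        ∀ L' : List ℕ, L'.Sublist L →
          L'.sum ≤ x ∧ r ∈ A.evalFrom {p} (List.replicate (x - L'.sum) a)
  | 0, _, _, _, h, _ => ⟨[], rfl, by simp, fun L' hL' => by simp [List.sublist_nil.1 hL', h]⟩
  | N + 1, p, r, x, h, hx => by
    obtain ⟨q, i, j, hij, hjn, hi, hj, hrest⟩ :=
      exists_prefixes_meet hQ hn h (by nlinarith)
    have hjx : j ≤ x := hjn.trans ((Nat.le_mul_of_pos_right n N.succ_pos).trans hx)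
    have hxj : n * N ≤ x - j := by rw [Nat.mul_succ] at hx; omega
    obtain ⟨L, hlen, hL, hsub⟩ := exists_removable_loops hQ hn N hrest hxj
    refine ⟨(j - i) :: L, by simp [hlen], ?_, ?_⟩
    · simpa [Finset.mem_Icc, show 1 ≤ j - i ∧ j - i ≤ n by omega] using hL
    · intro L' hL'
      rcases List.sublist_cons_iff.1 hL' with hL' | ⟨L'', rfl, hL''⟩
      · obtain ⟨hle, hrun⟩ := hsub L' hL'
        have := mem_evalFrom_append_of_mem hj hrun
        rw [← List.replicate_add] at this
        exact ⟨by omega, by rwa [show j + (x - j - L'.sum) = x - L'.sum by omega] at this⟩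
      · obtain ⟨hle, hrun⟩ := hsub L'' hL''
        have := mem_evalFrom_append_of_mem hi hrun
        rw [← List.replicate_add] at this
        simp only [List.sum_cons]
        rw [show i + (x - j - L''.sum) = x - (j - i + L''.sum) by omega] at this
        exact ⟨by omega, this⟩

theorem mem_evalFrom_replicate_sub_factorial (hQ : ∀ q a, A.step q a ⊆ Q) (hn : Q.card < n)
    {p r : σ} {x : ℕ} (h : r ∈ A.evalFrom {p} (List.replicate x a))
    (hx : n * (n * n !) ≤ x) :
    r ∈ A.evalFrom {p} (List.replicate (x - n !) a) := by
  obtain ⟨L, hlen, hL, hsub⟩ := exists_removable_loops hQ hn (n * n !) h hx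
  obtain ⟨c, hc, hcount⟩ : ∃ c ∈ Finset.Icc 1 n, n ! ≤ L.count c := by
    refine Finset.exists_le_of_sum_le ⟨1, by simp; omega⟩ ?_
    have := Multiset.sum_count_eq_card (s := Finset.Icc 1 n) (m := (L : Multiset ℕ)) hL
    simp only [Multiset.coe_count, Multiset.coe_card] at this
    simp [this, hlen]
  rw [Finset.mem_Icc] at hc
  obtain ⟨t, ht⟩ := Nat.dvd_factorial hc.1 hc.2
  have hrep : (List.replicate t c).Sublist L := by
    rw [List.replicate_sublist_iff]
    nlinarith
  simpa [ht, mul_comm] using (hsub _ hrep).2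

theorem evalLE_replicate_reduceBelow (hQ : ∀ q a, A.step q a ⊆ Q) (hn : Q.card < n) {B : ℕ}
    (hB : n * (n * n !) ≤ B) (a : α) (x : ℕ) :
    A.EvalLE (List.replicate x a) (List.replicate (reduceBelow B n ! x) a) :=
  evalLE_of_mem_singleton fun _ _ h => reduceBelow_induction
    (fun _ hy hrun => mem_evalFrom_replicate_sub_factorial hQ hn hrun (hB.trans hy)) h

/-- Cut the run at two block boundaries where both the state and the set of blocks read so far
agree: the blocks in between have all been read before, so dropping them keeps the set. -/
theorem exists_shorter_mem_evalFrom_flatten {β : Type*} [DecidableEq β] {block : β → List α}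
    (hQ : ∀ q a, A.step q a ⊆ Q) (hblock : ∀ b, block b ≠ []) {p r : σ} {l : List β}
    (h : r ∈ A.evalFrom {p} (l.map block).flatten)
    (hlen : Q.card * l.toFinset.card < l.length) :
    ∃ l' : List β, l'.toFinset = l.toFinset ∧ l'.length < l.length ∧
      r ∈ A.evalFrom {p} (l'.map block).flatten := by
  have hsplit : ∀ k, ∃ q ∈ A.evalFrom {p} ((l.take k).map block).flatten,
      r ∈ A.evalFrom {q} ((l.drop k).map block).flatten := fun k => by
    rw [← mem_evalFrom_singleton_append, ← List.flatten_append, ← List.map_append,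
      List.take_append_drop]
    exact h
  choose s hpre hsuf using hsplit
  have hmaps : Set.MapsTo (fun k => (s k, (l.take k).toFinset.card)) (Finset.Icc 1 l.length)
      ↑(Q ×ˢ Finset.Icc 1 l.toFinset.card : Finset (σ × ℕ)) := fun k hk => by
    simp only [Finset.coe_Icc, Set.mem_Icc] at hk
    obtain ⟨b, hb⟩ : ∃ b, b ∈ l.take k := List.exists_mem_of_ne_nil _ (by
      rw [Ne, List.take_eq_nil_iff, ← List.length_eq_zero_iff]; omega)
    simp only [Finset.mem_coe, Finset.mem_product]
    refine ⟨evalFrom_subset_of_step_subset hQ ?_ (hpre k), ?_⟩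
    · rw [Ne, List.flatten_eq_nil_iff]
      exact fun hnil => hblock b (hnil _ (List.mem_map_of_mem hb))
    · refine Finset.mem_Icc.2 ⟨Finset.card_pos.2 ⟨b, List.mem_toFinset.2 hb⟩,
        Finset.card_le_card fun c hc => ?_⟩
      exact List.mem_toFinset.2 (List.mem_of_mem_take (List.mem_toFinset.1 hc))
  obtain ⟨i, hi, j, hj, hij, hs⟩ :=
    Finset.exists_lt_map_eq_of_card_lt_of_maps_to (hf := hmaps) (by simpa using hlen)
  simp only [Finset.mem_Icc, Prod.mk.injEq] at hi hj hs
  have htake : (l.take i).toFinset = (l.take j).toFinset := by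
    refine Finset.eq_of_subset_of_card_le (fun c hc => ?_) hs.2.ge
    rw [List.mem_toFinset] at hc ⊢
    exact (List.take_sublist_take_left hij.le).subset hc
  refine ⟨l.take i ++ l.drop j, ?_, ?_, ?_⟩
  · rw [List.toFinset_append, htake, ← List.toFinset_append, List.take_append_drop]
  · simp only [List.length_append, List.length_take, List.length_drop]
    omega
  · rw [List.map_append, List.flatten_append]
    exact mem_evalFrom_append_of_mem (hpre i) (hs.1 ▸ hsuf j)

theorem exists_short_mem_evalFrom_flatten {β : Type*} [DecidableEq β] {block : β → List α}
    (hQ : ∀ q a, A.step q a ⊆ Q) (hblock : ∀ b, block b ≠ []) {p r : σ} (l : List β)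
    (h : r ∈ A.evalFrom {p} (l.map block).flatten) :
    ∃ l' : List β, l'.toFinset = l.toFinset ∧ l'.length ≤ Q.card * l.toFinset.card ∧
      r ∈ A.evalFrom {p} (l'.map block).flatten := by
  by_cases hlen : Q.card * l.toFinset.card < l.length
  · obtain ⟨l₁, hset₁, _, h₁⟩ := exists_shorter_mem_evalFrom_flatten hQ hblock h hlen
    obtain ⟨l', hset', hlen', h'⟩ := exists_short_mem_evalFrom_flatten hQ hblock l₁ h₁
    exact ⟨l', hset'.trans hset₁, hset₁ ▸ hlen', h'⟩
  · exact ⟨l, rfl, not_lt.1 hlen, h⟩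
termination_by l.length

end NFA

theorem rbOf_eq_of_toFinset_eq {es es' : List (ℕ × ℕ)} (h : es.toFinset = es'.toFinset) :
    rbOf es = rbOf es' := by
  have hmem (e : ℕ × ℕ) : e ∈ es ↔ e ∈ es' := by
    rw [← List.mem_toFinset, h, List.mem_toFinset]
  simp only [rbOf, RBGraph.mk.injEq, h, and_true]
  constructor <;> ext <;> simp [hmem]

theorem HasRBDS.rbOf_map {es : List (ℕ × ℕ)} {k : ℕ} (f g : ℕ → ℕ)
    (h : HasRBDS (rbOf es) k) :
    HasRBDS (rbOf (es.map (Prod.map f g))) k := by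
  obtain ⟨S, hSR, hcard, hdom⟩ := h
  refine ⟨S.image f, fun r hr => ?_, Finset.card_image_le.trans hcard, fun b hb => ?_⟩
  · obtain ⟨r₀, hr₀, rfl⟩ := Finset.mem_image.1 hr
    obtain ⟨b, he⟩ : ∃ b, (r₀, b) ∈ es := by simpa [rbOf] using hSR hr₀
    simpa [rbOf] using ⟨r₀, ⟨b, he⟩, rfl⟩
  · simp only [rbOf, List.map_map, List.mem_toFinset, List.mem_map] at hb
    obtain ⟨⟨r, b⟩, he, rfl⟩ := hb
    obtain ⟨r', hr', he'⟩ := hdom b (by simpa [rbOf] using ⟨r, he⟩)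
    refine ⟨f r', Finset.mem_image_of_mem f hr', ?_⟩
    simpa [rbOf] using ⟨r', b, by simpa [rbOf] using he', rfl, rfl⟩

theorem hasRBDS_rbOf_of_card_le {es : List (ℕ × ℕ)} {k : ℕ} (h : (rbOf es).R.card ≤ k) :
    HasRBDS (rbOf es) k := by
  refine ⟨(rbOf es).R, subset_rfl, h, fun b hb => ?_⟩
  simp only [rbOf, List.mem_toFinset, List.mem_map] at hb ⊢
  obtain ⟨e, he, rfl⟩ := hb
  exact ⟨e.1, ⟨e, he, rfl⟩, he⟩

def edgeTok (e : ℕ × ℕ) : Word := leftTok e.1 ++ rightTok e.2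

theorem encode_eq (k : ℕ) (es : List (ℕ × ℕ)) :
    encode k es = thresholdTok k ++ (es.map edgeTok).flatten := rfl

theorem edgeTok_ne_nil (e : ℕ × ℕ) : edgeTok e ≠ [] := by simp [edgeTok, leftTok]

theorem NFA.evalLE_encode_reduceBelow {σ : Type*} {A : NFA Letter σ} {Q : Finset σ} {n : ℕ}
    (hQ : ∀ q a, A.step q a ⊆ Q) (hn : Q.card < n) {B B' : ℕ} (hB : n * (n * n !) ≤ B)
    (hB' : n * (n * n !) ≤ B') (k : ℕ) (es : List (ℕ × ℕ)) :
    A.EvalLE (encode k es) (encode (reduceBelow B' n ! k)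
      (es.map (Prod.map (reduceBelow B n !) (reduceBelow B n !)))) := by
  have tok {C} (hC : n * (n * n !) ≤ C) (a b c : Letter) (x : ℕ) :
      A.EvalLE (b :: (List.replicate x a ++ [c]))
        (b :: (List.replicate (reduceBelow C n ! x) a ++ [c])) :=
    (EvalLE.refl [b]).append ((evalLE_replicate_reduceBelow hQ hn hC a x).append (EvalLE.refl [c]))
  rw [encode_eq, encode_eq, List.map_map]
  exact (tok hB' _ _ _ k).append (EvalLE.flatten_map (f := edgeTok)
    (fun e => (tok hB _ _ _ e.1).append (tok hB _ _ _ e.2)) es)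

/-- In an NFA with `m` transitions, a block of at least `labelBound m` equal letters can be
shortened by `(m + 1)!`. -/
def labelBound (m : ℕ) : ℕ := (m + 1) * ((m + 1) * (m + 1)!)

def NFAEnc.toNFA (M : NFAEnc) : NFA Letter ℕ where
  step q x := {q' | (q, x, q') ∈ M.1}
  start := {M.2.1}
  accept := {q | q ∈ M.2.2}

def NFAEnc.targets (M : NFAEnc) : Finset ℕ := (M.1.map fun t => t.2.2).toFinset

namespace NFAEnc

variable (M : NFAEnc)

theorem mem_encLang_iff {w : Word} :
    w ∈ encLang M ↔ ∃ q ∈ M.2.2, q ∈ M.toNFA.evalFrom {M.2.1} w := by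
  have : M.toNFA.stepSet = encStep M.1 := by
    funext S x
    ext q
    simp [NFA.mem_stepSet, encStep, toNFA]
  simp only [encLang, NFA.evalFrom, this, Set.mem_ofPred_eq]

theorem toNFA_step_subset (q : ℕ) (x : Letter) : M.toNFA.step q x ⊆ M.targets := fun q' h => by
  simpa [targets] using ⟨q, x, h⟩

theorem card_targets_le : M.targets.card ≤ M.1.length :=
  (List.toFinset_card_le _).trans (List.length_map _).le

variable {M}

theorem exists_labels_lt_labelBound {k : ℕ} {es : List (ℕ × ℕ)}
    (hacc : encode k es ∈ encLang M) (hds : HasRBDS (rbOf es) k) :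
    ∃ k' < labelBound M.1.length + (M.1.length + 1)!, ∃ es' : List (ℕ × ℕ),
      (∀ e ∈ es', e.1 < labelBound M.1.length ∧ e.2 < labelBound M.1.length) ∧
      encode k' es' ∈ encLang M ∧ HasRBDS (rbOf es') k' := by
  set n := M.1.length + 1
  set B := labelBound M.1.length
  set f := reduceBelow B n !
  have hnB : n ! ≤ B :=
    (Nat.le_mul_of_pos_left _ M.1.length.succ_pos).trans
      (Nat.le_mul_of_pos_left _ M.1.length.succ_pos)
  have hf (x : ℕ) : f x < B := reduceBelow_lt (Nat.factorial_pos n) hnB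
  have hQ : M.targets.card < n := Nat.lt_succ_of_le M.card_targets_le
  refine ⟨reduceBelow (B + n !) n ! k, reduceBelow_lt (Nat.factorial_pos n) (by omega),
    es.map (Prod.map f f), fun e he => ?_, ?_, ?_⟩
  · obtain ⟨e, -, rfl⟩ := List.mem_map.1 he
    exact ⟨hf e.1, hf e.2⟩
  · obtain ⟨q, hq, hrun⟩ := M.mem_encLang_iff.1 hacc
    exact M.mem_encLang_iff.2 ⟨q, hq, NFA.evalLE_encode_reduceBelow M.toNFA_step_subset hQ
      le_rfl (Nat.le_add_right _ _) k es _ hrun⟩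
  · by_cases hk : k < B + (n !)
    · rw [reduceBelow_of_lt hk]
      exact hds.rbOf_map f f
    -- a large threshold becomes at least `B`, which exceeds the number of red vertices
    have hred : (rbOf (es.map (Prod.map f f))).R ⊆ Finset.range B := fun r hr => by
      obtain ⟨e, he, rfl⟩ := List.mem_map.1 (List.mem_toFinset.1 hr)
      obtain ⟨e, -, rfl⟩ := List.mem_map.1 he
      exact Finset.mem_range.2 (hf e.1)
    refine hasRBDS_rbOf_of_card_le ?_
    calc (rbOf (es.map (Prod.map f f))).R.card
        ≤ B := (Finset.card_le_card hred).trans (Finset.card_range B).le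
      _ = B + (n !) - (n !) := by omega
      _ ≤ reduceBelow (B + n !) n ! k := sub_le_reduceBelow (not_lt.1 hk)

theorem exists_length_le_of_labels_lt {k c : ℕ} {es : List (ℕ × ℕ)}
    (hes : ∀ e ∈ es, e.1 < c ∧ e.2 < c) (hacc : encode k es ∈ encLang M) :
    ∃ es' : List (ℕ × ℕ), es'.toFinset = es.toFinset ∧
      es'.length ≤ M.1.length * (c * c) ∧ encode k es' ∈ encLang M := by
  obtain ⟨q, hq, hrun⟩ := M.mem_encLang_iff.1 hacc
  obtain ⟨r, hthr, hedges⟩ := NFA.mem_evalFrom_singleton_append.1 (encode_eq k es ▸ hrun)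
  obtain ⟨es', hset, hlen, hedges'⟩ :=
    NFA.exists_short_mem_evalFrom_flatten M.toNFA_step_subset edgeTok_ne_nil es hedges
  have hcard : es.toFinset.card ≤ c * c := by
    rw [← Finset.card_range c, ← Finset.card_product]
    refine Finset.card_le_card fun e he => ?_
    obtain ⟨h₁, h₂⟩ := hes e (List.mem_toFinset.1 he)
    simpa using And.intro h₁ h₂
  refine ⟨es', hset, hlen.trans (Nat.mul_le_mul M.card_targets_le hcard), ?_⟩
  exact M.mem_encLang_iff.2
    ⟨q, hq, encode_eq k es' ▸ NFA.mem_evalFrom_append_of_mem hthr hedges'⟩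

end NFAEnc

def List.wordsUpTo {α : Type*} (P : List α) : ℕ → List (List α)
  | 0 => [[]]
  | n + 1 => [] :: P.flatMap fun a => (P.wordsUpTo n).map (a :: ·)

theorem List.mem_wordsUpTo {α : Type*} {P : List α} :
    ∀ {n : ℕ} {l : List α}, l ∈ P.wordsUpTo n ↔ l.length ≤ n ∧ ∀ a ∈ l, a ∈ P
  | 0, l => by cases l <;> simp [wordsUpTo]
  | n + 1, [] => by simp [wordsUpTo]
  | n + 1, a :: l => by simp [wordsUpTo, mem_wordsUpTo (n := n), and_left_comm]

def candidateEdgeLists (m : ℕ) : List (List (ℕ × ℕ)) :=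
  (List.range (labelBound m) ×ˢ List.range (labelBound m)).wordsUpTo
    (m * (labelBound m * labelBound m))

theorem exists_decodes_iff (M : NFAEnc) :
    (∃ w : Word, w ∈ encLang M ∧ w ∈ Enc ∧
        ∃ (G : RBGraph) (k : ℕ), decodesToRB w G k ∧ HasRBDS G k) ↔
      ∃ k es, encode k es ∈ encLang M ∧ HasRBDS (rbOf es) k := by
  constructor
  · rintro ⟨_, hacc, -, _, k, ⟨es, rfl, rfl⟩, hds⟩
    exact ⟨k, es, hacc, hds⟩
  · rintro ⟨k, es, hacc, hds⟩
    exact ⟨_, hacc, ⟨k, es, rfl⟩, _, k, ⟨es, rfl, rfl⟩, hds⟩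

theorem exists_encode_iff_exists_candidate (M : NFAEnc) :
    (∃ k es, encode k es ∈ encLang M ∧ HasRBDS (rbOf es) k) ↔
      ∃ k < labelBound M.1.length + (M.1.length + 1)!, ∃ es ∈ candidateEdgeLists M.1.length,
        encode k es ∈ encLang M ∧ HasRBDS (rbOf es) k := by
  refine ⟨fun ⟨k, es, hacc, hds⟩ => ?_, fun ⟨k, _, es, _, h⟩ => ⟨k, es, h⟩⟩
  obtain ⟨k', hk', es₁, hlabels, hacc₁, hds₁⟩ :=
    NFAEnc.exists_labels_lt_labelBound hacc hds
  obtain ⟨es₂, hset, hlen, hacc₂⟩ := NFAEnc.exists_length_le_of_labels_lt hlabels hacc₁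
  refine ⟨k', hk', es₂, List.mem_wordsUpTo.2 ⟨hlen, fun ⟨a, b⟩ he => ?_⟩, hacc₂,
    rbOf_eq_of_toFinset_eq hset ▸ hds₁⟩
  rw [← List.mem_toFinset, hset, List.mem_toFinset] at he
  simpa using hlabels _ he

theorem hasRBDS_rbOf_iff {es : List (ℕ × ℕ)} {k : ℕ} :
    HasRBDS (rbOf es) k ↔
      ∃ S ∈ (es.map Prod.fst).wordsUpTo k,
        ∀ b ∈ es.map Prod.snd, ∃ r ∈ S, (r, b) ∈ es := by
  simp only [List.mem_wordsUpTo]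
  constructor
  · rintro ⟨S, hSR, hcard, hdom⟩
    refine ⟨S.toList, ⟨by simpa using hcard, fun r hr => ?_⟩, fun b hb => ?_⟩
    · simpa [rbOf] using hSR (Finset.mem_toList.1 hr)
    · obtain ⟨r, hr, he⟩ := hdom b (by simpa [rbOf] using hb)
      exact ⟨r, Finset.mem_toList.2 hr, by simpa [rbOf] using he⟩
  · rintro ⟨S, ⟨hlen, hSR⟩, hdom⟩
    refine ⟨S.toFinset, fun r hr => ?_, (List.toFinset_card_le S).trans hlen, fun b hb => ?_⟩
    · simpa [rbOf] using hSR r (List.mem_toFinset.1 hr)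
    · obtain ⟨r, hr, he⟩ := hdom b (by simpa [rbOf] using hb)
      exact ⟨r, List.mem_toFinset.2 hr, by simpa [rbOf] using he⟩

def encStepList (T : List (ℕ × Letter × ℕ)) (S : List ℕ) (x : Letter) : List ℕ :=
  (T.filter fun t => t.1 ∈ S ∧ t.2.1 = x).map fun t => t.2.2

theorem mem_foldl_encStepList (T : List (ℕ × Letter × ℕ)) :
    ∀ (w : Word) (S : List ℕ) (q : ℕ),
      q ∈ w.foldl (encStepList T) S ↔ q ∈ w.foldl (encStep T) {q | q ∈ S}
  | [], _, _ => Iff.rfl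
  | x :: w, S, q => by
    have : {q | q ∈ encStepList T S x} = encStep T {q | q ∈ S} x := by
      ext q
      simp [encStepList, encStep, and_comm]
    rw [List.foldl_cons, List.foldl_cons, mem_foldl_encStepList T w, this]

namespace Primrec

variable {α : Type*} [Primcodable α]

theorem nat_factorial : Primrec Nat.factorial :=
  (nat_rec₁ 1 (nat_mul.comp₂ (succ.comp₂ .left) .right)).of_eq fun n => by
    induction n with
    | zero => rfl
    | succ n ih => simp [Nat.factorial_succ, ← ih]

theorem list_replicate : Primrec₂ (@List.replicate α) := by
  refine (nat_rec (const []) (list_cons.comp₂ .left (snd.comp₂ .right))).swap.of_eq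
    fun n a => ?_
  induction n with
  | zero => rfl
  | succ n ih => simp [List.replicate_succ, ← ih]

theorem list_wordsUpTo : Primrec₂ (@List.wordsUpTo α) := by
  have step : Primrec₂ fun (P : List α) (p : ℕ × List (List α)) =>
      [] :: P.flatMap fun a => p.2.map (a :: ·) :=
    list_cons.comp₂ (const []).to₂ (list_flatMap fst
      (list_map (snd.comp (snd.comp fst)) (list_cons.comp₂ (snd.comp₂ .left) .right)).to₂)
  refine (nat_rec (const [[]]) step).of_eq fun P n => ?_
  induction n with
  | zero => rfl
  | succ n ih => simp [List.wordsUpTo, ← ih]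

end Primrec

section Computability

open Primrec

theorem primrecRel_mem_list {α : Type*} [Primcodable α] [DecidableEq α] :
    PrimrecRel fun (a : α) (l : List α) => a ∈ l :=
  (PrimrecRel.exists_mem_list Primrec.eq).swap.of_eq fun a l => by simp [Function.swap]

theorem primrec_token (a b c : Letter) : Primrec fun x => b :: (List.replicate x a ++ [c]) :=
  list_cons.comp (const b) (list_append.comp (list_replicate.comp .id (const a)) (const [c]))

theorem primrec₂_encode : Primrec₂ encode :=
  list_append.comp₂ ((primrec_token _ _ _).comp₂ .left) (list_flatten.comp₂ (list_map snd
    (list_append.comp₂ ((primrec_token _ _ _).comp₂ (fst.comp₂ .right))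
      ((primrec_token _ _ _).comp₂ (snd.comp₂ .right)))).to₂)

theorem primrecRel_mem_encLang : PrimrecRel fun (M : NFAEnc) (w : Word) => w ∈ encLang M := by
  have hsel : PrimrecRel fun (t : ℕ × Letter × ℕ) (p : List ℕ × Letter) =>
      t.1 ∈ p.1 ∧ t.2.1 = p.2 :=
    PrimrecPred.and (primrecRel_mem_list.comp₂ (fst.comp₂ .left) (fst.comp₂ .right))
      (Primrec.eq.comp₂ (fst.comp₂ (snd.comp₂ .left)) (snd.comp₂ .right))
  have hstep : Primrec₂ fun (M : NFAEnc) (p : List ℕ × Letter) => encStepList M.1 p.1 p.2 :=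
    list_map ((PrimrecRel.listFilter hsel).comp (fst.comp fst) snd)
      (snd.comp₂ (snd.comp₂ .right))
  have hrun : Primrec₂ fun (M : NFAEnc) (w : Word) => w.foldl (encStepList M.1) [M.2.1] :=
    list_foldl snd (list_cons.comp (fst.comp (snd.comp fst)) (const []))
      (hstep.comp₂ (fst.comp₂ .left) .right)
  refine ((PrimrecRel.exists_mem_list (primrecRel_mem_list (α := ℕ))).comp₂
    (snd.comp₂ (snd.comp₂ .left)) hrun).of_eq fun M w => ?_
  simp only [encLang, mem_foldl_encStepList, List.mem_singleton, Set.ofPred_eq_eq_singleton,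
    Set.mem_ofPred_eq]

theorem primrecRel_hasRBDS_rbOf :
    PrimrecRel fun (k : ℕ) (es : List (ℕ × ℕ)) => HasRBDS (rbOf es) k := by
  have hedge : PrimrecRel fun (r : ℕ) (p : ℕ × List (ℕ × ℕ)) => (r, p.1) ∈ p.2 :=
    primrecRel_mem_list.comp₂ (Primrec₂.pair.comp₂ .left (fst.comp₂ .right))
      (snd.comp₂ .right)
  have hcovered : PrimrecRel fun (b : ℕ) (p : List ℕ × List (ℕ × ℕ)) =>
      ∃ r ∈ p.1, (r, b) ∈ p.2 :=
    (PrimrecRel.exists_mem_list hedge).comp₂ (fst.comp₂ .right)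
      (Primrec₂.pair.comp₂ .left (snd.comp₂ .right))
  have hdom : PrimrecRel fun (S : List ℕ) (es : List (ℕ × ℕ)) =>
      ∀ b ∈ es.map Prod.snd, ∃ r ∈ S, (r, b) ∈ es :=
    (PrimrecRel.forall_mem_list hcovered).comp₂ (list_map snd (snd.comp₂ .right)).to₂
      Primrec₂.pair
  exact ((PrimrecRel.exists_mem_list hdom).comp₂
    (list_wordsUpTo.comp₂ (list_map snd (fst.comp₂ .right)).to₂ .left) .right).of_eq
    fun _ _ => hasRBDS_rbOf_iff.symm

theorem primrec_labelBound : Primrec labelBound :=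
  nat_mul.comp succ (nat_mul.comp succ (nat_factorial.comp succ))

theorem primrec_candidateEdgeLists : Primrec candidateEdgeLists :=
  list_wordsUpTo.comp
    (list_flatMap (list_range.comp primrec_labelBound) (list_map
      (list_range.comp (primrec_labelBound.comp fst))
      (Primrec₂.pair.comp₂ (snd.comp₂ .left) .right)).to₂)
    (nat_mul.comp .id (nat_mul.comp primrec_labelBound primrec_labelBound))

theorem primrecPred_exists_candidate : PrimrecPred fun M : NFAEnc =>
    ∃ k < labelBound M.1.length + (M.1.length + 1)!, ∃ es ∈ candidateEdgeLists M.1.length,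
      encode k es ∈ encLang M ∧ HasRBDS (rbOf es) k := by
  have hm : Primrec fun M : NFAEnc => M.1.length := list_length.comp fst
  have hwitness : PrimrecRel fun (es : List (ℕ × ℕ)) (p : ℕ × NFAEnc) =>
      encode p.1 es ∈ encLang p.2 ∧ HasRBDS (rbOf es) p.1 :=
    PrimrecPred.and (primrecRel_mem_encLang.comp₂ (snd.comp₂ .right)
        (primrec₂_encode.comp₂ (fst.comp₂ .right) .left))
      (primrecRel_hasRBDS_rbOf.comp₂ (fst.comp₂ .right) .left)
  have hsearch : PrimrecRel fun (k : ℕ) (M : NFAEnc) =>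
      ∃ es ∈ candidateEdgeLists M.1.length, encode k es ∈ encLang M ∧ HasRBDS (rbOf es) k :=
    (PrimrecRel.exists_mem_list hwitness).comp₂
      ((primrec_candidateEdgeLists.comp hm).comp₂ .right) Primrec₂.pair
  have hthresholds : Primrec fun M : NFAEnc =>
      List.range (labelBound M.1.length + (M.1.length + 1)!) :=
    list_range.comp (nat_add.comp (primrec_labelBound.comp hm) (nat_factorial.comp (succ.comp hm)))
  exact ((PrimrecRel.exists_mem_list hsearch).comp hthresholds .id).of_eq fun M => by simp

end Computability

/-- `int_Reg(Red-Blue Dominating Set)` is decidable: the predicate on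
(finite encodings of) NFAs `M` over `Σ`, asserting that some `w ∈ L(M) ∩ Enc` with
`decode_red-blue(w) = (G, k)` satisfies that `G` has a red-blue dominating set of size
at most `k`, is computable. -/
theorem stmt18 :
    ComputablePred (fun M : NFAEnc =>
      ∃ w : Word, w ∈ encLang M ∧ w ∈ Enc ∧
        ∃ (G : RBGraph) (k : ℕ), decodesToRB w G k ∧ HasRBDS G k) :=
  primrecPred_exists_candidate.computablePred.of_eq fun M =>
    ((exists_decodes_iff M).trans (exists_encode_iff_exists_candidate M)).symm
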